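/- arXiv:2009.07650 — 7 statements merged into one kernel-verified Lean document; each statement's English description precedes it below -/
import Mathlib

section
/- Let G be a finite group whose order is divisible by at least two distinct primes, and suppose that every 2-maximal subgroup of G is a Hall subgroup of G. If G is supersolvable, then the order of G is squarefree. -/
/-- A subgroup `H` of a group `G` is a Hall subgroup if its order and index are coprime. -/
def IsHallSubgroup {G : Type*} [Group G] (H : Subgroup G) : Prop :=
  Nat.Coprime (Nat.card H) H.index

/-- `H` is a maximal subgroup of `M` (both viewed as subgroups of the ambient group). -/
def IsMaximalIn {G : Type*} [Group G] (H M : Subgroup G) : Prop :=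
  H < M ∧ ∀ K : Subgroup G, H < K → K ≤ M → K = M

/-- `H` is a 2-maximal subgroup of `G`: it is maximal in some maximal subgroup of `G`. -/
def Is2Maximal {G : Type*} [Group G] (H : Subgroup G) : Prop :=
  ∃ M : Subgroup G, IsCoatom M ∧ IsMaximalIn H M

/-- A group is supersolvable if it has a chain of normal subgroups from `⊥` to `⊤`
with all successive quotients cyclic. -/
def IsSupersolvable (G : Type*) [Group G] : Prop :=
  ∃ (n : ℕ) (H : Fin (n + 1) → Subgroup G) (hnorm : ∀ i, (H i).Normal),
    H 0 = ⊥ ∧ H (Fin.last n) = ⊤ ∧ Monotone H ∧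
    ∀ i : Fin n, IsCyclic
      ((H i.succ).map (@QuotientGroup.mk' G _ (H i.castSucc) (hnorm i.castSucc)))

/-!
In a supersolvable group every prime `r` dividing the order is the index of a subgroup: at the
step of the normal series where `r` stops dividing the index, the cyclic factor has a subgroup of
index `r` that is normal in the whole quotient, and Schur–Zassenhaus complements the factor of
order `r` it leaves. If `p ^ 2` divided `|G|`, pick a second prime `q`, a maximal subgroup `K` of
index `q`, and in the supersolvable group `K` a subgroup `H` of index `p`. Then `H` is 2-maximal
of index `p q`, yet `p` still divides `|H|`, so `H` is not a Hall subgroup.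
-/

theorem Fin.exists_castSucc_and_not_succ {n : ℕ} {P : Fin (n + 1) → Prop}
    (h0 : P 0) (hlast : ¬ P (Fin.last n)) : ∃ i : Fin n, P i.castSucc ∧ ¬ P i.succ := by
  by_contra! h
  exact hlast (Fin.induction h0 h (Fin.last n))

theorem IsCyclic.exists_index_eq {G : Type*} [Group G] [Finite G] [IsCyclic G] {d : ℕ}
    (hd : d ∣ Nat.card G) : ∃ R : Subgroup G, R.index = d := by
  let := IsCyclic.commGroup (α := G)
  refine ⟨(powMonoidHom d).range, ?_⟩
  rw [IsCyclic.index_powMonoidHom_range, Nat.gcd_eq_right hd]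

namespace Subgroup

variable {G : Type*} [Group G]

theorem relIndex_map_subtype {N : Subgroup G} (R : Subgroup N) :
    (R.map N.subtype).relIndex N = R.index := by
  rw [relIndex, subgroupOf, comap_map_eq_self_of_injective N.subtype_injective]

theorem card_map_mk' (R N : Subgroup G) [R.Normal] :
    Nat.card (N.map (QuotientGroup.mk' R)) = R.relIndex N := by
  rw [← relIndex_ker, QuotientGroup.ker_mk']

theorem index_map_mk'_of_le {R N : Subgroup G} [R.Normal] (hRN : R ≤ N) :
    (N.map (QuotientGroup.mk' R)).index = N.index :=
  index_map_eq _ (QuotientGroup.mk'_surjective R) (by rwa [QuotientGroup.ker_mk'])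

theorem isMaximalIn_of_relIndex_prime {H M : Subgroup G} (hHM : H ≤ M)
    (hp : (H.relIndex M).Prime) : IsMaximalIn H M := by
  refine ⟨hHM.lt_of_ne fun h ↦ Nat.not_prime_one (by simpa [h] using hp), fun L hHL hLM ↦ ?_⟩
  rw [← relIndex_mul_relIndex H L M hHL.le hLM, Nat.prime_mul_iff, relIndex_eq_one,
    relIndex_eq_one] at hp
  rcases hp with ⟨-, hML⟩ | ⟨-, hLH⟩
  · exact hLM.antisymm hML
  · exact (hHL.not_ge hLH).elim

theorem isCoatom_of_index_prime {H : Subgroup G} (hp : H.index.Prime) : IsCoatom H := by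
  rw [← relIndex_top_right] at hp
  obtain ⟨hlt, hmax⟩ := isMaximalIn_of_relIndex_prime le_top hp
  exact ⟨hlt.ne, fun K hK ↦ hmax K hK le_top⟩

/-- Conjugation restricts to an automorphism of `N`, and every endomorphism of a cyclic group
is a power map. -/
theorem Normal.of_le_of_isCyclic {N R : Subgroup G} [N.Normal] [IsCyclic N] (hRN : R ≤ N) :
    R.Normal where
  conj_mem x hx g := by
    obtain ⟨m, hm⟩ := (MulAut.conjNormal g : MulAut N).toMonoidHom.map_cyclic
    have hconj := congrArg Subtype.val (hm ⟨x, hRN hx⟩)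
    rw [MulEquiv.coe_toMonoidHom, MulAut.conjNormal_apply] at hconj
    rw [hconj]
    simpa using R.zpow_mem hx m

/-- `K ⧸ (A ⊓ K)` embeds into `G ⧸ A`, carrying the factor of `B ⊓ K` into that of `B`. -/
theorem isCyclic_map_mk'_subgroupOf {A B : Subgroup G} [A.Normal]
    [IsCyclic (B.map (QuotientGroup.mk' A))] (K : Subgroup G) :
    IsCyclic ((B.subgroupOf K).map (QuotientGroup.mk' (A.subgroupOf K))) := by
  let φ := QuotientGroup.map (A.subgroupOf K) A K.subtype le_rfl
  have hφ : Function.Injective φ := by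
    rw [← MonoidHom.ker_eq_bot_iff]
    exact (QuotientGroup.ker_map _ _ _ _).trans (QuotientGroup.map_mk'_self _)
  have hle :
      ((B.subgroupOf K).map (QuotientGroup.mk' _)).map φ ≤ B.map (QuotientGroup.mk' A) := by
    rw [map_map]
    rintro _ ⟨k, hk, rfl⟩
    exact ⟨k, hk, rfl⟩
  have := isCyclic_of_le hle
  exact (equivMapOfInjective _ φ hφ).isCyclic.mpr this

/-- The image of `N` in `G ⧸ R` has a complement by Schur–Zassenhaus. -/
theorem exists_index_eq_relIndex_of_coprime [Finite G] {R N : Subgroup G} [R.Normal] [N.Normal]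
    (hRN : R ≤ N) (hcop : (R.relIndex N).Coprime N.index) :
    ∃ K : Subgroup G, K.index = R.relIndex N := by
  obtain ⟨C, hC⟩ := exists_right_complement'_of_coprime
    (N := N.map (QuotientGroup.mk' R)) (by rwa [card_map_mk', index_map_mk'_of_le hRN])
  exact ⟨C.comap (QuotientGroup.mk' R), by
    rw [index_comap_of_surjective _ (QuotientGroup.mk'_surjective R), hC.index_eq_card,
      card_map_mk']⟩

theorem exists_index_eq_prime_of_isCyclic [Finite G] {N : Subgroup G} [N.Normal] [IsCyclic N]
    {r : ℕ} (hr : r.Prime) (hrN : r ∣ Nat.card N) (hrNindex : ¬ r ∣ N.index) :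
    ∃ K : Subgroup G, K.index = r := by
  obtain ⟨R, hR⟩ := IsCyclic.exists_index_eq hrN
  have hRN : R.map N.subtype ≤ N := map_subtype_le R
  have : (R.map N.subtype).Normal := Normal.of_le_of_isCyclic hRN
  rw [← hR, ← relIndex_map_subtype]
  refine exists_index_eq_relIndex_of_coprime hRN ?_
  rwa [relIndex_map_subtype, hR, hr.coprime_iff_not_dvd]

end Subgroup

namespace IsSupersolvable

variable {G : Type*} [Group G]

theorem exists_index_eq_prime [Finite G] (hG : IsSupersolvable G) {r : ℕ} (hr : r.Prime)
    (hrG : r ∣ Nat.card G) : ∃ K : Subgroup G, K.index = r := by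
  obtain ⟨n, H, hnorm, h0, hlast, hmono, hcyc⟩ := hG
  obtain ⟨i, hrA, hrB⟩ := Fin.exists_castSucc_and_not_succ (P := fun j ↦ r ∣ (H j).index)
    (by rwa [h0, Subgroup.index_bot]) (by rw [hlast, Subgroup.index_top]; exact hr.not_dvd_one)
  have := hnorm i.castSucc
  have hAB : H i.castSucc ≤ H i.succ := hmono (Fin.castSucc_le_succ i)
  let f := QuotientGroup.mk' (H i.castSucc)
  have : ((H i.succ).map f).Normal := (hnorm i.succ).map f (QuotientGroup.mk'_surjective _)
  have : IsCyclic ((H i.succ).map f) := hcyc i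
  have hrN : r ∣ Nat.card ((H i.succ).map f) := by
    rw [← Subgroup.relIndex_mul_index hAB] at hrA
    rw [Subgroup.card_map_mk']
    exact (hr.dvd_mul.mp hrA).resolve_right hrB
  obtain ⟨K, hK⟩ := Subgroup.exists_index_eq_prime_of_isCyclic hr hrN
    (by rwa [Subgroup.index_map_mk'_of_le hAB])
  refine ⟨K.comap f, ?_⟩
  rw [Subgroup.index_comap_of_surjective _ (QuotientGroup.mk'_surjective _), hK]

theorem subgroup (hG : IsSupersolvable G) (K : Subgroup G) : IsSupersolvable K := by
  obtain ⟨n, H, hnorm, h0, hlast, hmono, hcyc⟩ := hG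
  refine ⟨n, fun i ↦ (H i).subgroupOf K, fun i ↦ (hnorm i).subgroupOf K, ?_, ?_,
    fun i j hij ↦ Subgroup.comap_mono (hmono hij), fun i ↦ ?_⟩
  · simp [h0]
  · simp [hlast]
  · have := hnorm i.castSucc
    have := hcyc i
    exact Subgroup.isCyclic_map_mk'_subgroupOf K

end IsSupersolvable

theorem supersolvable_of_hall_two_maximal_squarefree
    {G : Type*} [Group G] [Finite G]
    (hπ : ∃ p q : ℕ, p.Prime ∧ q.Prime ∧ p ≠ q ∧ p ∣ Nat.card G ∧ q ∣ Nat.card G)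
    (hhall : ∀ H : Subgroup G, Is2Maximal H → IsHallSubgroup H)
    (hss : IsSupersolvable G) :
    Squarefree (Nat.card G) := by
  rw [Nat.squarefree_iff_prime_squarefree]
  intro p hp hpp
  obtain ⟨q, hq, hqp, hqG⟩ : ∃ q : ℕ, q.Prime ∧ q ≠ p ∧ q ∣ Nat.card G := by
    obtain ⟨p₀, q₀, hp₀, hq₀, hne, hp₀G, hq₀G⟩ := hπ
    by_cases h : p₀ = p
    · exact ⟨q₀, hq₀, h ▸ hne.symm, hq₀G⟩
    · exact ⟨p₀, hp₀, h, hp₀G⟩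
  have hpq : p.Coprime q := (Nat.coprime_primes hp hq).mpr hqp.symm
  obtain ⟨K, hK⟩ := hss.exists_index_eq_prime hq hqG
  have hppK : p * p ∣ Nat.card K := by
    rw [← K.card_mul_index, hK] at hpp
    exact (hpq.mul_left hpq).dvd_of_dvd_mul_right hpp
  obtain ⟨L, hL⟩ := (hss.subgroup K).exists_index_eq_prime hp (dvd_of_mul_left_dvd hppK)
  set H := L.map K.subtype
  have hHall := hhall H ⟨K, Subgroup.isCoatom_of_index_prime (hK ▸ hq),
    Subgroup.isMaximalIn_of_relIndex_prime (Subgroup.map_subtype_le L)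
      (by rwa [Subgroup.relIndex_map_subtype, hL])⟩
  have hHindex : H.index = p * q := by rw [Subgroup.index_map_subtype, hL, hK]
  have hpH : p ∣ Nat.card H := by
    rw [← H.card_mul_index, hHindex, ← mul_assoc, mul_right_comm] at hpp
    exact hpq.dvd_of_dvd_mul_right (Nat.dvd_of_mul_dvd_mul_right hp.pos hpp)
  exact Nat.not_coprime_of_dvd_of_dvd hp.one_lt hpH (hHindex ▸ dvd_mul_right p q) hHall
end

section
/- Let G be a finite group whose order is divisible by at least two distinct primes, and suppose that every 2-maximal subgroup of G is a Hall subgroup of G. Then every maximal subgroup of G is a Hall subgroup of G. -/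
/-!
If a prime `p` divides both `|M|` and `|G : M|` for a maximal subgroup `M`, there are two cases.
If `M` is a `p`-group, it lies properly in a Sylow `p`-subgroup (whose index is prime to `p`),
which by maximality is `G`; then `G` is a `p`-group, against the two prime divisors of `|G|`.
Otherwise Cauchy's theorem gives a proper subgroup of `M` of order `p`, and a maximal subgroup
`H` of `M` containing it is 2-maximal with `p` dividing both `|H|` and `|G : H|`, so `H` is
not a Hall subgroup.
-/

section

variable {G : Type*} [Group G]

theorem CovBy.isMaximalIn {H M : Subgroup G} (h : H ⋖ M) : IsMaximalIn H M :=
  ⟨h.lt, fun _ hHK hKM => hKM.lt_or_eq.resolve_left (h.2 hHK)⟩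

theorem IsHallSubgroup.not_dvd_index {H : Subgroup G} (hH : IsHallSubgroup H) {p : ℕ}
    (hp : p.Prime) (hpH : p ∣ Nat.card H) : ¬p ∣ H.index :=
  fun hpI => hp.ne_one (Nat.eq_one_of_dvd_coprimes hH hpH hpI)

variable [Finite G] {p : ℕ} [Fact p.Prime]

theorem IsPGroup.eq_of_prime_dvd_card (hG : IsPGroup p G) {q : ℕ} (hq : q.Prime)
    (hqG : q ∣ Nat.card G) : q = p := by
  obtain ⟨n, hn⟩ := hG.exists_card_eq
  exact (Nat.prime_dvd_prime_iff_eq hq Fact.out).mp (hq.dvd_of_dvd_pow (hn ▸ hqG))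

theorem IsPGroup.of_isCoatom_of_dvd_index {M : Subgroup G} (hMp : IsPGroup p M)
    (hM : IsCoatom M) (hpI : p ∣ M.index) : IsPGroup p G := by
  obtain ⟨S, hMS⟩ := hMp.exists_le_sylow
  have hMS_ne : M ≠ S := fun h => S.not_dvd_index (h ▸ hpI)
  have hS : (S : Subgroup G) = ⊤ := hM.2 _ (hMS.lt_of_ne hMS_ne)
  exact (hS ▸ S.isPGroup').of_equiv Subgroup.topEquiv

theorem exists_lt_prime_dvd_card_of_not_isPGroup {M : Subgroup G} (hpM : p ∣ Nat.card M)
    (hMp : ¬IsPGroup p M) : ∃ K < M, p ∣ Nat.card K := by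
  obtain ⟨x, hx⟩ := exists_prime_orderOf_dvd_card' p hpM
  have hK : Nat.card (Subgroup.zpowers (x : G)) = p := by
    rw [Nat.card_zpowers, Subgroup.orderOf_coe, hx]
  have hKM : Subgroup.zpowers (x : G) ≤ M := (Subgroup.zpowers_le).mpr x.2
  have hKp : IsPGroup p (Subgroup.zpowers (x : G)) := .of_card (n := 1) (by rw [hK, pow_one])
  exact ⟨_, hKM.lt_of_ne fun h => hMp (h ▸ hKp), by rw [hK]⟩

end

theorem maximal_is_hall_of_two_maximal_hall
    {G : Type*} [Group G] [Finite G]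
    (hπ : ∃ p q : ℕ, p.Prime ∧ q.Prime ∧ p ≠ q ∧ p ∣ Nat.card G ∧ q ∣ Nat.card G)
    (hhall : ∀ H : Subgroup G, Is2Maximal H → IsHallSubgroup H) :
    ∀ M : Subgroup G, IsCoatom M → IsHallSubgroup M := by
  intro M hM
  by_contra hM_hall
  obtain ⟨p, hp, hpM, hpI⟩ := Nat.Prime.not_coprime_iff_dvd.mp hM_hall
  have : Fact p.Prime := ⟨hp⟩
  by_cases hMp : IsPGroup p M
  · obtain ⟨q, r, hq, hr, hqr, hqG, hrG⟩ := hπ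
    have hGp := hMp.of_isCoatom_of_dvd_index hM hpI
    exact hqr ((hGp.eq_of_prime_dvd_card hq hqG).trans (hGp.eq_of_prime_dvd_card hr hrG).symm)
  · obtain ⟨K, hKM, hpK⟩ := exists_lt_prime_dvd_card_of_not_isPGroup hpM hMp
    obtain ⟨H, hKH, hHM⟩ := exists_le_covBy_of_lt hKM
    have hH : IsHallSubgroup H := hhall H ⟨M, hM, hHM.isMaximalIn⟩
    exact hH.not_dvd_index hp (hpK.trans (Subgroup.card_dvd_of_le hKH))
      (hpI.trans (Subgroup.index_dvd_of_le hHM.le))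
end

section
/- Let G be a finite group and N a normal subgroup of G such that the quotient G/N is isomorphic to PSL(2,7). Then G has a 2-maximal subgroup H that is not a Hall subgroup of G; specifically, one may choose H containing N with |H| = 12·|N| and |G : H| = 14, so that 2 divides both |H| and |G : H|. -/
set_option maxRecDepth 10000

namespace PSL27Aux

open Matrix
open scoped MatrixGroups

abbrev T4 := ℕ × ℕ × ℕ × ℕ

def nmul (x y : T4) : T4 :=
  ((x.1*y.1 + x.2.1*y.2.2.1) % 7, (x.1*y.2.1 + x.2.1*y.2.2.2) % 7,
   (x.2.2.1*y.1 + x.2.2.2*y.2.2.1) % 7, (x.2.2.1*y.2.1 + x.2.2.2*y.2.2.2) % 7)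

def ninv (x : T4) : T4 := (x.2.2.2 % 7, (7 - x.2.1 % 7) % 7, (7 - x.2.2.1 % 7) % 7, x.1 % 7)

def O48 : List T4 := [(0,1,6,0), (0,2,3,1), (0,3,2,1), (0,4,5,6), (0,5,4,6), (0,6,1,0), (1,0,0,1), (1,1,1,2), (1,2,6,6), (1,3,3,3), (1,4,5,0), (1,5,4,0), (1,6,2,6), (2,0,1,4), (2,1,0,4), (2,2,5,2), (2,3,3,5), (2,4,4,5), (2,5,2,2), (2,6,6,1), (3,0,1,5), (3,1,0,5), (3,2,2,4), (3,3,6,4), (3,4,4,1), (3,5,5,4), (3,6,3,4), (4,0,6,2), (4,1,4,3), (4,2,2,3), (4,3,3,6), (4,4,1,3), (4,5,5,3), (4,6,0,2), (5,0,6,3), (5,1,1,6), (5,2,5,5), (5,3,3,2), (5,4,4,2), (5,5,2,5), (5,6,0,3), (6,0,0,6), (6,1,5,1), (6,2,3,0), (6,3,2,0), (6,4,4,4), (6,5,1,1), (6,6,6,5)]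
def T24 : List T4 := [(0,1,6,0), (0,2,3,1), (0,3,2,1), (0,4,5,6), (0,5,4,6), (0,6,1,0), (1,0,0,1), (1,4,5,0), (1,5,4,0), (2,0,1,4), (2,1,0,4), (2,3,3,5), (3,0,1,5), (3,1,0,5), (3,5,5,4), (4,0,6,2), (4,2,2,3), (4,6,0,2), (5,0,6,3), (5,4,4,2), (5,6,0,3), (6,0,0,6), (6,2,3,0), (6,3,2,0)]

theorem O48_mul : ∀ x ∈ O48, ∀ y ∈ O48, nmul x y ∈ O48 := by decide
theorem O48_inv : ∀ x ∈ O48, ninv x ∈ O48 := by decide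
theorem O48_det : ∀ x ∈ O48, (x.1 * x.2.2.2) % 7 = (1 + x.2.1 * x.2.2.1) % 7 := by decide
theorem O48_bound : ∀ x ∈ O48, x.1 < 7 ∧ x.2.1 < 7 ∧ x.2.2.1 < 7 ∧ x.2.2.2 < 7 := by decide
theorem T24_mul : ∀ x ∈ T24, ∀ y ∈ T24, nmul x y ∈ T24 := by decide
theorem T24_inv : ∀ x ∈ T24, ninv x ∈ T24 := by decide
theorem T24_det : ∀ x ∈ T24, (x.1 * x.2.2.2) % 7 = (1 + x.2.1 * x.2.2.1) % 7 := by decide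
theorem T24_bound : ∀ x ∈ T24, x.1 < 7 ∧ x.2.1 < 7 ∧ x.2.2.1 < 7 ∧ x.2.2.2 < 7 := by decide
theorem T24_le : ∀ x ∈ T24, x ∈ O48 := by decide
theorem O48_nodup : O48.Nodup := by decide
theorem T24_nodup : T24.Nodup := by decide
theorem O48_len : O48.length = 48 := by rfl
theorem T24_len : T24.length = 24 := by rfl
theorem O48_one : ((1,0,0,1) : T4) ∈ O48 := by decide
theorem T24_one : ((1,0,0,1) : T4) ∈ T24 := by decide
theorem T24_negone : ((6,0,0,6) : T4) ∈ T24 := by decide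

abbrev SL7 := Matrix.SpecialLinearGroup (Fin 2) (ZMod 7)

/-- Embed a tuple of naturals as a 2×2 matrix over `ZMod 7`. -/
def embn (x : T4) : Matrix (Fin 2) (Fin 2) (ZMod 7) :=
  !![(x.1 : ZMod 7), (x.2.1 : ZMod 7); (x.2.2.1 : ZMod 7), (x.2.2.2 : ZMod 7)]

theorem embn_mul (x y : T4) : embn x * embn y = embn (nmul x y) := by
  simp only [embn, nmul, ZMod.natCast_mod, Nat.cast_add, Nat.cast_mul]
  rw [Matrix.mul_fin_two]

theorem embn_det {x : T4} (h : (x.1 * x.2.2.2) % 7 = (1 + x.2.1 * x.2.2.1) % 7) :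
    (embn x).det = 1 := by
  have h2 : ((x.1 * x.2.2.2 : ℕ) : ZMod 7) = ((1 + x.2.1 * x.2.2.1 : ℕ) : ZMod 7) := by
    rw [← ZMod.natCast_mod (x.1 * x.2.2.2) 7, ← ZMod.natCast_mod (1 + x.2.1 * x.2.2.1) 7, h]
  push_cast at h2
  rw [embn, Matrix.det_fin_two_of]
  linear_combination h2

theorem embn_adj (x : T4) : (embn x).adjugate = embn (ninv x) := by
  have key : ∀ b : ℕ, (((7 - b % 7) % 7 : ℕ) : ZMod 7) = -(b : ℕ) := by
    intro b
    have hle : b % 7 ≤ 7 := by omega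
    rw [ZMod.natCast_mod, Nat.cast_sub hle]
    have h7 : ((7 : ℕ) : ZMod 7) = 0 := by decide
    rw [h7, ZMod.natCast_mod]
    ring
  rw [embn, Matrix.adjugate_fin_two]
  ext i j
  fin_cases i <;> fin_cases j <;> simp [embn, ninv, key, ZMod.natCast_mod]

theorem embn_inj {x y : T4} (hx : x.1 < 7 ∧ x.2.1 < 7 ∧ x.2.2.1 < 7 ∧ x.2.2.2 < 7)
    (hy : y.1 < 7 ∧ y.2.1 < 7 ∧ y.2.2.1 < 7 ∧ y.2.2.2 < 7) (h : embn x = embn y) : x = y := by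
  obtain ⟨x1, x2, x3, x4⟩ := x
  obtain ⟨y1, y2, y3, y4⟩ := y
  obtain ⟨b1, b2, b3, b4⟩ := hx
  obtain ⟨c1, c2, c3, c4⟩ := hy
  have b1' : x1 < 7 := b1
  have b2' : x2 < 7 := b2
  have b3' : x3 < 7 := b3
  have b4' : x4 < 7 := b4
  have c1' : y1 < 7 := c1
  have c2' : y2 < 7 := c2
  have c3' : y3 < 7 := c3
  have c4' : y4 < 7 := c4
  have e11 : ((x1 : ℕ) : ZMod 7) = ((y1 : ℕ) : ZMod 7) := by
    have := congrFun (congrFun h 0) 0; simpa [embn] using this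
  have e12 : ((x2 : ℕ) : ZMod 7) = ((y2 : ℕ) : ZMod 7) := by
    have := congrFun (congrFun h 0) 1; simpa [embn] using this
  have e21 : ((x3 : ℕ) : ZMod 7) = ((y3 : ℕ) : ZMod 7) := by
    have := congrFun (congrFun h 1) 0; simpa [embn] using this
  have e22 : ((x4 : ℕ) : ZMod 7) = ((y4 : ℕ) : ZMod 7) := by
    have := congrFun (congrFun h 1) 1; simpa [embn] using this
  have v11 := congrArg ZMod.val e11
  have v12 := congrArg ZMod.val e12
  have v21 := congrArg ZMod.val e21
  have v22 := congrArg ZMod.val e22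
  rw [ZMod.val_cast_of_lt b1', ZMod.val_cast_of_lt c1'] at v11
  rw [ZMod.val_cast_of_lt b2', ZMod.val_cast_of_lt c2'] at v12
  rw [ZMod.val_cast_of_lt b3', ZMod.val_cast_of_lt c3'] at v21
  rw [ZMod.val_cast_of_lt b4', ZMod.val_cast_of_lt c4'] at v22
  simp_all

theorem embn_one : embn (1,0,0,1) = 1 := by
  rw [embn, Matrix.one_fin_two]
  norm_num

/-- The subgroup of `SL(2,7)` corresponding to a list of tuples closed under the operations. -/
def sg (L : List T4) (h1 : ((1,0,0,1) : T4) ∈ L)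
    (hdet : ∀ x ∈ L, (x.1 * x.2.2.2) % 7 = (1 + x.2.1 * x.2.2.1) % 7)
    (hm : ∀ x ∈ L, ∀ y ∈ L, nmul x y ∈ L)
    (hi : ∀ x ∈ L, ninv x ∈ L) : Subgroup SL7 where
  carrier := {A : SL7 | ∃ x ∈ L, embn x = (A : Matrix (Fin 2) (Fin 2) (ZMod 7))}
  one_mem' := ⟨(1,0,0,1), h1, embn_one⟩
  mul_mem' := by
    rintro A B ⟨x, hx, hxA⟩ ⟨y, hy, hyB⟩
    exact ⟨nmul x y, hm x hx y hy, by
      rw [← embn_mul, hxA, hyB]; rfl⟩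
  inv_mem' := by
    rintro A ⟨x, hx, hxA⟩
    refine ⟨ninv x, hi x hx, ?_⟩
    rw [← embn_adj, hxA, Matrix.SpecialLinearGroup.coe_inv]

theorem sg_card (L : List T4) (h1 hdet hm hi) (hnd : L.Nodup)
    (hb : ∀ x ∈ L, x.1 < 7 ∧ x.2.1 < 7 ∧ x.2.2.1 < 7 ∧ x.2.2.2 < 7) :
    Nat.card (sg L h1 hdet hm hi) = L.length := by
  classical
  have hbij : Function.Bijective
      (fun p : {x // x ∈ L} => (⟨⟨embn p.1, embn_det (hdet p.1 p.2)⟩,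
        ⟨p.1, p.2, rfl⟩⟩ : (sg L h1 hdet hm hi))) := by
    constructor
    · rintro ⟨x, hx⟩ ⟨y, hy⟩ hxy
      have : embn x = embn y := congrArg (fun A => (A : SL7).1) (congrArg Subtype.val hxy)
      exact Subtype.ext (embn_inj (hb x hx) (hb y hy) this)
    · rintro ⟨A, x, hx, hxA⟩
      exact ⟨⟨x, hx⟩, by
        apply Subtype.ext
        apply Subtype.ext
        exact hxA⟩
  have h2 : Nat.card (sg L h1 hdet hm hi) = Nat.card {x // x ∈ L} :=
    (Nat.card_congr (Equiv.ofBijective _ hbij)).symm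
  rw [h2]
  have h3 : {x // x ∈ L} ≃ {x // x ∈ L.toFinset} :=
    Equiv.subtypeEquivRight (by simp)
  rw [Nat.card_congr h3, Nat.card_eq_fintype_card, Fintype.card_coe,
    List.toFinset_card_of_nodup hnd]

def KO : Subgroup SL7 := sg O48 O48_one O48_det O48_mul O48_inv
def KT : Subgroup SL7 := sg T24 T24_one T24_det T24_mul T24_inv

theorem KO_card : Nat.card KO = 48 := by
  rw [KO, sg_card O48 _ _ _ _ O48_nodup O48_bound, O48_len]
theorem KT_card : Nat.card KT = 24 := by
  rw [KT, sg_card T24 _ _ _ _ T24_nodup T24_bound, T24_len]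

theorem KT_le_KO : KT ≤ KO := by
  rintro A ⟨x, hx, hxA⟩
  exact ⟨x, T24_le x hx, hxA⟩

/-- -1 in SL(2,7). -/
def neg1 : SL7 := ⟨-1, by simp [Matrix.det_neg]⟩

theorem embn_neg1 : embn (6,0,0,6) = (neg1 : Matrix (Fin 2) (Fin 2) (ZMod 7)) := by
  have h6 : ((6 : ℕ) : ZMod 7) = -1 := by decide
  have h0 : ((0 : ℕ) : ZMod 7) = 0 := by decide
  show embn (6,0,0,6) = (-1 : Matrix (Fin 2) (Fin 2) (ZMod 7))
  rw [embn]
  ext i j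
  fin_cases i <;> fin_cases j <;>
    simp [h0, Matrix.one_fin_two] <;> decide

theorem mem_center_iff' (A : SL7) : A ∈ Subgroup.center SL7 ↔ A = 1 ∨ A = neg1 := by
  rw [Matrix.SpecialLinearGroup.mem_center_iff]
  constructor
  · rintro ⟨r, hr, hA⟩
    rw [Fintype.card_fin] at hr
    have hr' : r = 1 ∨ r = -1 := by
      have : ∀ s : ZMod 7, s * s = 1 → s = 1 ∨ s = -1 := by decide
      exact this r (by rw [← pow_two]; exact hr)
    rcases hr' with rfl | rfl
    · left
      apply Subtype.ext
      rw [← hA, _root_.map_one]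
      rfl
    · right
      apply Subtype.ext
      rw [← hA, _root_.map_neg, _root_.map_one]
      rfl
  · rintro (rfl | rfl)
    · exact ⟨1, by rw [one_pow], by rw [_root_.map_one]; rfl⟩
    · exact ⟨-1, by rw [Fintype.card_fin]; ring, by rw [_root_.map_neg, _root_.map_one]; rfl⟩

theorem one_ne_neg1 : (1 : SL7) ≠ neg1 := by
  intro h
  have h2 : (1 : ZMod 7) = -1 := by
    have := congrArg (fun A : SL7 => (A : Matrix (Fin 2) (Fin 2) (ZMod 7)) 0 0) h
    simpa [neg1] using this
  exact absurd h2 (by decide)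

theorem card_center : Nat.card (Subgroup.center SL7) = 2 := by
  have hset : (Subgroup.center SL7 : Set SL7) = {1, neg1} := by
    ext A
    rw [Set.mem_insert_iff, Set.mem_singleton_iff]
    exact mem_center_iff' A
  rw [show ((Subgroup.center SL7 : Subgroup SL7) : Type _) = ((Subgroup.center SL7 : Set SL7) : Type _) from rfl]
  rw [Nat.card_congr (Equiv.setCongr hset), Nat.card_coe_set_eq, Set.ncard_pair one_ne_neg1]

theorem center_le_KT : Subgroup.center SL7 ≤ KT := by
  intro A hA
  rcases (mem_center_iff' A).mp hA with rfl | rfl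
  · exact KT.one_mem
  · exact ⟨(6,0,0,6), T24_negone, embn_neg1⟩

theorem card_SL7 : Nat.card SL7 = 336 := by
  have hdet_iff : ∀ a b c d : ZMod 7, a * d - b * c = 1 ↔
      a.val * d.val % 7 = (1 + b.val * c.val % 7) % 7 := by
    intro a b c d
    haveI : Fact (1 < 7) := ⟨by norm_num⟩
    rw [sub_eq_iff_eq_add, ← (ZMod.val_injective 7).eq_iff, ZMod.val_mul, ZMod.val_add,
      ZMod.val_mul, ZMod.val_one]
  have e : SL7 ≃ {x : ZMod 7 × ZMod 7 × ZMod 7 × ZMod 7 //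
      x.1.val * x.2.2.2.val % 7 = (1 + x.2.1.val * x.2.2.1.val % 7) % 7} :=
    { toFun := fun A => ⟨(A.1 0 0, A.1 0 1, A.1 1 0, A.1 1 1), by
        have := A.2
        rw [Matrix.det_fin_two] at this
        exact (hdet_iff _ _ _ _).mp this⟩
      invFun := fun x => ⟨!![x.1.1, x.1.2.1; x.1.2.2.1, x.1.2.2.2], by
        rw [Matrix.det_fin_two_of]
        exact (hdet_iff _ _ _ _).mpr x.2⟩
      left_inv := fun A => Subtype.ext (Matrix.eta_fin_two A.1).symm
      right_inv := fun x => rfl }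
  rw [Nat.card_congr e, Nat.card_eq_fintype_card]
  decide

theorem neg1_mem_KT : Subgroup.center SL7 ≤ KO := le_trans center_le_KT KT_le_KO

/-- Auxiliary: the kernel of a hom is contained in any comap. -/
theorem ker_le_comap' {G Q : Type*} [Group G] [Group Q] (f : G →* Q) (K : Subgroup Q) :
    f.ker ≤ K.comap f := fun x hx => by
  rw [Subgroup.mem_comap, MonoidHom.mem_ker.mp hx]
  exact K.one_mem

/-- Cardinality of a comap under a surjective hom. -/
theorem card_comap_mul {G Q : Type*} [Group G] [Group Q] [Finite G] (f : G →* Q)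
    (hf : Function.Surjective f) (K : Subgroup Q) :
    Nat.card (K.comap f) = Nat.card K * Nat.card f.ker := by
  set H := K.comap f with hH
  let g : H →* Q := f.comp H.subtype
  have hrange : g.range = K := by
    ext x
    simp only [MonoidHom.mem_range, g]
    constructor
    · rintro ⟨⟨y, hy⟩, rfl⟩
      exact hy
    · intro hx
      obtain ⟨y, rfl⟩ := hf x
      exact ⟨⟨y, hx⟩, rfl⟩
  have hker : g.ker = f.ker.subgroupOf H := by
    ext x
    simp [g, MonoidHom.mem_ker, Subgroup.mem_subgroupOf]
  have h1 : Nat.card H = Nat.card (H ⧸ g.ker) * Nat.card g.ker :=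
    Subgroup.card_eq_card_quotient_mul_card_subgroup g.ker
  have h2 : Nat.card (H ⧸ g.ker) = Nat.card K := by
    rw [← hrange]
    exact Nat.card_congr (QuotientGroup.quotientKerEquivRange g).toEquiv
  have h3 : Nat.card g.ker = Nat.card f.ker := by
    rw [hker]
    exact Nat.card_congr (Subgroup.subgroupOfEquivOfLe (ker_le_comap' f K)).toEquiv
  rw [h1, h2, h3]

end PSL27Aux

/-- If `H ≤ K ≤ M`, `H < K`, `|M| = |H| * p` with `p` prime, then `K = M`. -/
theorem eq_of_between {G : Type*} [Group G] [Finite G] {p : ℕ} (hp : p.Prime)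
    {H M K : Subgroup G} (hHM : H ≤ M) (hcard : Nat.card M = Nat.card H * p)
    (hHK : H < K) (hKM : K ≤ M) : K = M := by
  obtain ⟨s, hs⟩ := Subgroup.card_dvd_of_le hHK.le
  have hH0 : 0 < Nat.card H := Nat.card_pos
  have hsd : s ∣ p := by
    have hd : Nat.card H * s ∣ Nat.card H * p := by
      rw [← hs, ← hcard]
      exact Subgroup.card_dvd_of_le hKM
    exact (mul_dvd_mul_iff_left hH0.ne').mp hd
  rcases hp.eq_one_or_self_of_dvd s hsd with h1 | hps
  · exfalso
    have : H = K := Subgroup.eq_of_le_of_card_ge hHK.le (by rw [hs, h1, mul_one])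
    exact hHK.ne this
  · exact Subgroup.eq_of_le_of_card_ge hKM (by rw [hs, hps, hcard])

open scoped MatrixGroups in
theorem exists_two_maximal_not_hall_of_quotient_psl27
    {G : Type*} [Group G] [Finite G] (N : Subgroup G) [N.Normal]
    (h : Nonempty ((G ⧸ N) ≃* PSL(2, ZMod 7))) :
    ∃ H : Subgroup G, Is2Maximal H ∧ N ≤ H ∧
      Nat.card H = 12 * Nat.card N ∧ H.index = 14 ∧
      2 ∣ Nat.card H ∧ 2 ∣ H.index ∧ ¬ IsHallSubgroup H := by
  classical
  obtain ⟨e⟩ := h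
  set n := Nat.card N with hn
  have hn0 : 0 < n := Nat.card_pos
  -- the projection SL(2,7) → PSL(2,7)
  let π := QuotientGroup.mk' (Subgroup.center PSL27Aux.SL7)
  have hπ : Function.Surjective π := QuotientGroup.mk'_surjective _
  have hπker : π.ker = Subgroup.center PSL27Aux.SL7 := QuotientGroup.ker_mk' _
  -- cardinality of PSL(2,7)
  have cardPSL : Nat.card (PSL(2, ZMod 7)) = 168 := by
    have h1 : Nat.card PSL27Aux.SL7 =
        Nat.card (PSL(2, ZMod 7)) * Nat.card (Subgroup.center PSL27Aux.SL7) :=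
      Subgroup.card_eq_card_quotient_mul_card_subgroup _
    rw [PSL27Aux.card_SL7, PSL27Aux.card_center] at h1
    omega
  -- subgroups of PSL of order 24 and 12
  let BP : Subgroup (PSL(2, ZMod 7)) := PSL27Aux.KO.map π
  let AP : Subgroup (PSL(2, ZMod 7)) := PSL27Aux.KT.map π
  have hAPBP : AP ≤ BP := Subgroup.map_mono PSL27Aux.KT_le_KO
  have cardBP : Nat.card BP = 24 := by
    have h1 : Nat.card (BP.comap π) = Nat.card BP * Nat.card π.ker :=
      PSL27Aux.card_comap_mul π hπ BP
    have h2 : BP.comap π = PSL27Aux.KO := by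
      rw [show BP.comap π = PSL27Aux.KO ⊔ π.ker from Subgroup.comap_map_eq π PSL27Aux.KO,
        sup_eq_left.mpr (by rw [hπker]; exact PSL27Aux.neg1_mem_KT)]
    rw [h2, PSL27Aux.KO_card, hπker, PSL27Aux.card_center] at h1
    omega
  have cardAP : Nat.card AP = 12 := by
    have h1 : Nat.card (AP.comap π) = Nat.card AP * Nat.card π.ker :=
      PSL27Aux.card_comap_mul π hπ AP
    have h2 : AP.comap π = PSL27Aux.KT := by
      rw [show AP.comap π = PSL27Aux.KT ⊔ π.ker from Subgroup.comap_map_eq π PSL27Aux.KT,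
        sup_eq_left.mpr (by rw [hπker]; exact PSL27Aux.center_le_KT)]
    rw [h2, PSL27Aux.KT_card, hπker, PSL27Aux.card_center] at h1
    omega
  -- pull back along e
  let B' : Subgroup (G ⧸ N) := BP.comap e.toMonoidHom
  let A' : Subgroup (G ⧸ N) := AP.comap e.toMonoidHom
  have hekertriv : (e.toMonoidHom : (G ⧸ N) →* PSL(2, ZMod 7)).ker = ⊥ :=
    (MonoidHom.ker_eq_bot_iff _).mpr e.injective
  have cardGN : Nat.card (G ⧸ N) = 168 := by
    rw [Nat.card_congr e.toEquiv, cardPSL]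
  have cardB' : Nat.card B' = 24 := by
    have := PSL27Aux.card_comap_mul e.toMonoidHom e.surjective BP
    rwa [hekertriv, Subgroup.card_bot, mul_one, cardBP] at this
  have cardA' : Nat.card A' = 12 := by
    have := PSL27Aux.card_comap_mul e.toMonoidHom e.surjective AP
    rwa [hekertriv, Subgroup.card_bot, mul_one, cardAP] at this
  have hA'B' : A' ≤ B' := Subgroup.comap_mono hAPBP
  -- pull back to G
  let ρ := QuotientGroup.mk' N
  have hρ : Function.Surjective ρ := QuotientGroup.mk'_surjective N
  have hρker : ρ.ker = N := QuotientGroup.ker_mk' N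
  let H : Subgroup G := A'.comap ρ
  let M : Subgroup G := B'.comap ρ
  have hNH : N ≤ H := hρker ▸ PSL27Aux.ker_le_comap' ρ A'
  have cardH : Nat.card H = 12 * n := by
    have := PSL27Aux.card_comap_mul ρ hρ A'
    rwa [hρker, cardA', ← hn] at this
  have cardM : Nat.card M = 24 * n := by
    have := PSL27Aux.card_comap_mul ρ hρ B'
    rwa [hρker, cardB', ← hn] at this
  have cardG : Nat.card G = 168 * n := by
    have := Subgroup.card_eq_card_quotient_mul_card_subgroup N
    rwa [cardGN, ← hn] at this
  have hHM : H ≤ M := Subgroup.comap_mono hA'B'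
  have hHMlt : H < M := lt_of_le_of_ne hHM (fun hEq => by
    rw [hEq] at cardH
    omega)
  have idxH : H.index = 14 := by
    have h1 : H.index = A'.index := Subgroup.index_comap_of_surjective A' hρ
    have h2 : Nat.card A' * A'.index = Nat.card (G ⧸ N) := Subgroup.card_mul_index A'
    rw [cardA', cardGN] at h2
    omega
  refine ⟨H, ⟨M, ⟨?_, ?_⟩, hHMlt, ?_⟩, hNH, by rw [cardH, hn], idxH, ?_, ?_, ?_⟩
  · -- M ≠ ⊤
    intro hMt
    rw [hMt, Subgroup.card_top, cardG] at cardM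
    omega
  · -- maximality of M
    intro K hMK
    exact eq_of_between (by norm_num : Nat.Prime 7) le_top
      (by rw [Subgroup.card_top, cardG, cardM]; ring) hMK le_top
  · -- maximality of H in M
    intro K hHK hKM
    exact eq_of_between (by norm_num : Nat.Prime 2)
      hHM (by rw [cardM, cardH]; ring) hHK hKM
  · exact ⟨6 * n, by rw [cardH]; ring⟩
  · exact ⟨7, by rw [idxH]⟩
  · intro hHall
    unfold IsHallSubgroup at hHall
    have h2 : 2 ∣ Nat.gcd (Nat.card H) H.index :=
      Nat.dvd_gcd ⟨6 * n, by rw [cardH]; ring⟩ ⟨7, by rw [idxH]⟩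
    rw [hHall] at h2
    omega
end

section
/- The general linear group GL(2, 29) of invertible 2×2 matrices over the field with 29 elements contains a cyclic subgroup Z of order 15 that acts irreducibly on the natural module (F₂₉)², i.e., no nonzero proper F₂₉-subspace of (F₂₉)² is invariant under all elements of Z. -/
private def Mmat : Matrix (Fin 2) (Fin 2) (ZMod 29) := !![0, 28; 1, 4]
private def Minv : Matrix (Fin 2) (Fin 2) (ZMod 29) := !![4, 1; 28, 0]

private lemma Mmul : Mmat * Minv = 1 := by decide
private lemma Mmul' : Minv * Mmat = 1 := by decide

private def gunit : Matrix.GeneralLinearGroup (Fin 2) (ZMod 29) :=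
  ⟨Mmat, Minv, Mmul, Mmul'⟩

private lemma zpowers_isCyclic {G : Type*} [Group G] (g : G) :
    IsCyclic (Subgroup.zpowers g) := by
  refine ⟨⟨⟨g, Subgroup.mem_zpowers g⟩, ?_⟩⟩
  rintro ⟨x, hx⟩
  obtain ⟨n, rfl⟩ := Subgroup.mem_zpowers_iff.mp hx
  exact ⟨n, by ext; simp⟩

set_option maxHeartbeats 1000000 in
private lemma Mpow15 : Mmat ^ 15 = 1 := by decide
set_option maxHeartbeats 1000000 in
private lemma Mpow5 : Mmat ^ 5 ≠ 1 := by decide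
set_option maxHeartbeats 1000000 in
private lemma Mpow3 : Mmat ^ 3 ≠ 1 := by decide

private lemma gval_pow (n : ℕ) : ((gunit ^ n : Matrix.GeneralLinearGroup (Fin 2) (ZMod 29)) :
    Matrix (Fin 2) (Fin 2) (ZMod 29)) = Mmat ^ n := Units.val_pow_eq_pow_val _ _

private lemma g_pow15 : gunit ^ 15 = 1 := by
  apply Units.ext
  rw [gval_pow, Units.val_one]
  exact Mpow15

private lemma g_pow5 : gunit ^ 5 ≠ 1 := by
  intro h
  exact Mpow5 (by rw [← gval_pow, h, Units.val_one])

private lemma g_pow3 : gunit ^ 3 ≠ 1 := by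
  intro h
  exact Mpow3 (by rw [← gval_pow, h, Units.val_one])

private lemma g_order : orderOf gunit = 15 := by
  have hd : orderOf gunit ∣ 15 := orderOf_dvd_of_pow_eq_one g_pow15
  have h5 : ¬ orderOf gunit ∣ 5 := fun h => g_pow5 (orderOf_dvd_iff_pow_eq_one.mp h)
  have h3 : ¬ orderOf gunit ∣ 3 := fun h => g_pow3 (orderOf_dvd_iff_pow_eq_one.mp h)
  have hle : orderOf gunit ≤ 15 := Nat.le_of_dvd (by norm_num) hd
  interval_cases h : orderOf gunit <;> simp_all <;> omega

private lemma h28' : (28 : ZMod 29) = -1 := by decide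

private lemma quad_ne : ∀ a b : ZMod 29, a * a + 4 * a * b + b * b = 0 → a = 0 ∧ b = 0 := by
  decide

theorem gl2_29_has_irreducible_cyclic_subgroup_of_order_15 :
    ∃ Z : Subgroup (Matrix.GeneralLinearGroup (Fin 2) (ZMod 29)),
      IsCyclic Z ∧ Nat.card Z = 15 ∧
      ∀ S : Submodule (ZMod 29) (Fin 2 → ZMod 29),
        (∀ g ∈ Z, ∀ v ∈ S,
          Matrix.mulVec ((g : Matrix.GeneralLinearGroup (Fin 2) (ZMod 29)) :
            Matrix (Fin 2) (Fin 2) (ZMod 29)) v ∈ S) →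
        S = ⊥ ∨ S = ⊤ := by
  refine ⟨Subgroup.zpowers gunit, zpowers_isCyclic _, ?_, ?_⟩
  · rw [Nat.card_zpowers, g_order]
  · intro S hS
    by_cases hbot : S = ⊥
    · exact Or.inl hbot
    right
    haveI : Fact (Nat.Prime 29) := ⟨by norm_num⟩
    obtain ⟨v, hvS, hv0⟩ := Submodule.exists_mem_ne_zero_of_ne_bot hbot
    set a := v 0 with ha
    set b := v 1 with hb
    have hab : ¬ (a = 0 ∧ b = 0) := by
      rintro ⟨h1, h2⟩
      apply hv0
      funext i
      fin_cases i
      · exact h1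
      · exact h2
    have hwS : Matrix.mulVec Mmat v ∈ S := hS gunit (Subgroup.mem_zpowers _) v hvS
    set w := Matrix.mulVec Mmat v with hw
    have hw0 : w 0 = 28 * b := by
      simp [hw, Mmat, Matrix.mulVec, dotProduct, Fin.sum_univ_two, ← ha, ← hb]
    have hw1 : w 1 = a + 4 * b := by
      simp [hw, Mmat, Matrix.mulVec, dotProduct, Fin.sum_univ_two, ← ha, ← hb]
    set D : ZMod 29 := a * a + 4 * a * b + b * b with hD
    have hDne : D ≠ 0 := fun h => hab (quad_ne a b h)
    have h28 : (28 : ZMod 29) = -1 := h28'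
    have he0 : (![1, 0] : Fin 2 → ZMod 29) ∈ S := by
      have hmem : (D⁻¹ * (a + 4 * b)) • v + (D⁻¹ * (-b)) • w ∈ S :=
        S.add_mem (S.smul_mem _ hvS) (S.smul_mem _ hwS)
      have heq : (D⁻¹ * (a + 4 * b)) • v + (D⁻¹ * (-b)) • w = ![1, 0] := by
        funext i
        fin_cases i
        · show D⁻¹ * (a + 4 * b) * a + D⁻¹ * (-b) * w 0 = 1
          rw [hw0, h28]
          have key : D⁻¹ * (a + 4 * b) * a + D⁻¹ * (-b) * (-1 * b) = D⁻¹ * D := by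
            rw [hD]; ring
          rw [key]; exact inv_mul_cancel₀ hDne
        · show D⁻¹ * (a + 4 * b) * b + D⁻¹ * (-b) * w 1 = 0
          rw [hw1]; ring
      rw [← heq]; exact hmem
    have he1 : (![0, 1] : Fin 2 → ZMod 29) ∈ S := by
      have hmem : (D⁻¹ * b) • v + (D⁻¹ * a) • w ∈ S :=
        S.add_mem (S.smul_mem _ hvS) (S.smul_mem _ hwS)
      have heq : (D⁻¹ * b) • v + (D⁻¹ * a) • w = ![0, 1] := by
        funext i
        fin_cases i
        · show D⁻¹ * b * a + D⁻¹ * a * w 0 = 0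
          rw [hw0, h28]; ring
        · show D⁻¹ * b * b + D⁻¹ * a * w 1 = 1
          rw [hw1]
          have key : D⁻¹ * b * b + D⁻¹ * a * (a + 4 * b) = D⁻¹ * D := by
            rw [hD]; ring
          rw [key]; exact inv_mul_cancel₀ hDne
      rw [← heq]; exact hmem
    ext u
    simp only [Submodule.mem_top, iff_true]
    have : u = u 0 • ![1, 0] + u 1 • ![0, 1] := by
      funext i
      fin_cases i <;> simp
    rw [this]
    exact S.add_mem (S.smul_mem _ he0) (S.smul_mem _ he1)
end

section
/- There exists a finite group G of order 29²·15 = 12615 (a semidirect product of an elementary abelian group of order 29² by a cyclic group of order 15 acting irreducibly) such that every maximal subgroup of G is a Hall subgroup of G and every 2-maximal subgroup of G is a Hall subgroup of G. -/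
/-- The asserted properties of the example group of order $29^2 \cdot 15$. -/
def GoodExampleGroup (G : Type) [Group G] : Prop :=
  Nat.card G = 12615 ∧
  (∃ A : Subgroup G, A.Normal ∧ Nat.card A = 29 ^ 2 ∧ (∀ a ∈ A, a ^ 29 = 1) ∧
    (∀ K : Subgroup G, K.Normal → K ≤ A → K = ⊥ ∨ K = A) ∧
    ∃ Z : Subgroup G, IsCyclic Z ∧ Nat.card Z = 15 ∧ A ⊓ Z = ⊥ ∧ A ⊔ Z = ⊤) ∧
  (∀ M : Subgroup G, IsCoatom M → IsHallSubgroup M) ∧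
  (∀ H : Subgroup G, Is2Maximal H → IsHallSubgroup H)

/-!
Take `G = 𝔽₈₄₁ ⋊ ⟨ζ⟩` with `ζ` of order 15 acting by multiplication, and `A = 𝔽₈₄₁`. Since 15 is
coprime to 28, no nontrivial power `u` of `ζ` lies in `𝔽₂₉`, so an additive subgroup of `𝔽₈₄₁`
stable under multiplication by `u` is a subspace over `𝔽₂₉(u) = 𝔽₈₄₁`: every element outside `A`
acts irreducibly on `A`. As any subgroup `H` normalizes `H ⊓ A`, this forces `H ⊓ A = ⊥`, `A ≤ H`
or `H ≤ A`. Subgroups of the first two kinds are Hall because `A` is a normal Hall subgroup of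
squarefree index 15. A 2-maximal subgroup `1 < H < A` would make `A` maximal, which it is not
because 3 divides 15 properly.
-/
open Subgroup Pointwise

theorem Nat.Coprime.coprime_mul_of_squarefree {a k l : ℕ} (ha : a.Coprime (k * l))
    (hkl : Squarefree (k * l)) : k.Coprime (a * l) :=
  ((ha.coprime_dvd_right (Dvd.intro l rfl)).symm).mul_right (Nat.coprime_of_squarefree_mul hkl)

theorem IsCyclic.exists_orderOf_eq_of_dvd {α : Type*} [Group α] [Finite α] [IsCyclic α] {d : ℕ}
    (hd : d ∣ Nat.card α) : ∃ g : α, orderOf g = d := by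
  obtain ⟨g, hg⟩ := IsCyclic.exists_ofOrder_eq_natCard (α := α)
  obtain ⟨e, he⟩ := hd
  have he0 : e ≠ 0 := by rintro rfl; simp [Nat.card_pos.ne'] at he
  refine ⟨g ^ e, ?_⟩
  rw [orderOf_pow_of_dvd he0 (hg ▸ he ▸ dvd_mul_left e d), hg, he,
    Nat.mul_div_cancel _ (Nat.pos_of_ne_zero he0)]

section GroupTheory

variable {G : Type*} [Group G]

section Hall

variable [Finite G] {A : Subgroup G}

theorem isHallSubgroup_of_inf_eq_bot [A.Normal] (hcop : (Nat.card A).Coprime A.index)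
    (hsq : Squarefree A.index) {H : Subgroup G} (hHA : H ⊓ A = ⊥) : IsHallSubgroup H := by
  have hcard : Nat.card H = A.relIndex H := by
    rw [← relIndex_bot_left, ← hHA, inf_relIndex_left]
  obtain ⟨l, hl⟩ : Nat.card H ∣ A.index := hcard ▸ relIndex_dvd_index_of_normal A H
  have hindex : H.index = Nat.card A * l := by
    apply Nat.eq_of_mul_eq_mul_left (Nat.card_pos (α := H))
    rw [card_mul_index, ← A.card_mul_index, hl]
    ring
  rw [IsHallSubgroup, hindex]
  exact (hl ▸ hcop).coprime_mul_of_squarefree (hl ▸ hsq)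

theorem isHallSubgroup_of_le (hcop : (Nat.card A).Coprime A.index)
    (hsq : Squarefree A.index) {H : Subgroup G} (hAH : A ≤ H) : IsHallSubgroup H := by
  obtain ⟨l, hl⟩ : H.index ∣ A.index := index_dvd_of_le hAH
  have hcard : Nat.card H = Nat.card A * l := by
    apply Nat.eq_of_mul_eq_mul_right (Nat.pos_of_ne_zero (H.index_ne_zero_of_finite))
    rw [card_mul_index, ← A.card_mul_index, hl]
    ring
  rw [IsHallSubgroup, hcard]
  exact ((hl ▸ hcop).coprime_mul_of_squarefree (hl ▸ hsq)).symm

theorem not_isCoatom_of_prime_dvd_index [A.Normal] (hcop : (Nat.card A).Coprime A.index) {p : ℕ}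
    (hp : p.Prime) (hpA : p ∣ A.index) (hlt : p < A.index) : ¬IsCoatom A := by
  intro hAcoatom
  have hpG : p ∣ Nat.card G := A.card_mul_index ▸ dvd_mul_of_dvd_right hpA _
  obtain ⟨x, hx⟩ := exists_prime_orderOf_dvd_card' (hp := ⟨hp⟩) p hpG
  have hxA : x ∉ A := fun hx' =>
    hp.one_lt.ne' (Nat.eq_one_of_dvd_coprimes (hcop.coprime_dvd_right hpA)
      (hx ▸ A.orderOf_dvd_natCard hx') dvd_rfl)
  have hsup : A ⊔ zpowers x = ⊤ :=
    hAcoatom.2 _ (lt_of_le_of_ne le_sup_left fun h => hxA (h ▸ mem_sup_right (mem_zpowers x)))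
  have hle : Nat.card G ≤ Nat.card A * p := by
    calc Nat.card G = Nat.card ((A : Set G) * (zpowers x : Set G)) := by
          rw [← normal_mul, hsup, coe_top, Nat.card_univ]
      _ ≤ Nat.card A * p := by
          rw [← hx, ← Nat.card_zpowers]; exact Set.natCard_mul_le
  rw [← A.card_mul_index] at hle
  exact absurd (Nat.le_of_mul_le_mul_left hle Nat.card_pos) (not_le.2 hlt)

end Hall

/-- Every element outside `A` acts irreducibly on `A` by conjugation. -/
def Subgroup.OutsideElementsActIrreducibly (A : Subgroup G) : Prop :=
  ∀ K ≤ A, K ≠ ⊥ → K ≠ A → normalizer (K : Set G) ≤ A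

namespace Subgroup.OutsideElementsActIrreducibly

variable {A : Subgroup G} (hA : A.OutsideElementsActIrreducibly)
include hA

theorem eq_bot_or_eq_of_normal (hAtop : A ≠ ⊤) {K : Subgroup G} [K.Normal] (hKA : K ≤ A) :
    K = ⊥ ∨ K = A := by
  by_contra! h
  exact hAtop (top_le_iff.1 (normalizer_eq_top (H := K) ▸ hA K hKA h.1 h.2))

theorem inf_eq_bot_or_le_or_le [hAn : A.Normal] (H : Subgroup G) :
    H ⊓ A = ⊥ ∨ A ≤ H ∨ H ≤ A := by
  by_cases hbot : H ⊓ A = ⊥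
  · exact .inl hbot
  by_cases htop : H ⊓ A = A
  · exact .inr (.inl (htop ▸ inf_le_left))
  have hH : H ≤ normalizer ((H ⊓ A : Subgroup G) : Set G) :=
    inf_comm H A ▸ normal_subgroupOf_iff_le_normalizer_inf.1 (hAn.subgroupOf H)
  exact .inr (.inr (hH.trans (hA _ inf_le_right hbot htop)))

theorem le_of_isCoatom [A.Normal] (hAtop : A ≠ ⊤) {M : Subgroup G} (hM : IsCoatom M)
    (hMA : M ⊓ A ≠ ⊥) : A ≤ M := by
  rcases hA.inf_eq_bot_or_le_or_le M with h | h | h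
  · exact absurd h hMA
  · exact h
  · exact ((hM.le_iff.1 h).resolve_left hAtop).le

variable [Finite G] [A.Normal] (hcop : (Nat.card A).Coprime A.index) (hsq : Squarefree A.index)
  (hAtop : A ≠ ⊤)
include hcop hsq hAtop

theorem isHallSubgroup_of_isCoatom {M : Subgroup G} (hM : IsCoatom M) : IsHallSubgroup M := by
  by_cases hMA : M ⊓ A = ⊥
  · exact isHallSubgroup_of_inf_eq_bot hcop hsq hMA
  · exact isHallSubgroup_of_le hcop hsq (hA.le_of_isCoatom hAtop hM hMA)

theorem isHallSubgroup_of_is2Maximal (hAcoatom : ¬IsCoatom A) {H : Subgroup G}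
    (hH : Is2Maximal H) : IsHallSubgroup H := by
  obtain ⟨M, hM, hHM, hmax⟩ := hH
  rcases hA.inf_eq_bot_or_le_or_le H with hHA | hAH | hHA
  · exact isHallSubgroup_of_inf_eq_bot hcop hsq hHA
  · exact isHallSubgroup_of_le hcop hsq hAH
  by_cases hbot : H = ⊥
  · exact isHallSubgroup_of_inf_eq_bot hcop hsq (hbot ▸ bot_inf_eq A)
  have hAM : A ≤ M := hA.le_of_isCoatom hAtop hM fun h =>
    hbot (le_bot_iff.1 (h ▸ le_inf hHM.le hHA))
  rcases hHA.eq_or_lt with rfl | hlt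
  · exact isHallSubgroup_of_le hcop hsq le_rfl
  · exact absurd (hmax A hlt hAM ▸ hM) hAcoatom

end Subgroup.OutsideElementsActIrreducibly

end GroupTheory

section Field

variable {p : ℕ} [Fact p.Prime] {F : Type*} [Field F] [Algebra (ZMod p) F]

theorem AddSubgroup.eq_top_of_mul_mem_of_finrank_eq_two (hF : Module.finrank (ZMod p) F = 2)
    {u : F} (hu : u ∉ Set.range (algebraMap (ZMod p) F)) {S : AddSubgroup F} (hS : S ≠ ⊥)
    (huS : ∀ x ∈ S, u * x ∈ S) : S = ⊤ := by
  obtain ⟨s, hs, hs0⟩ := S.bot_or_exists_ne_zero.resolve_left hS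
  have hli : LinearIndependent (ZMod p) ![s, u * s] := by
    refine (LinearIndependent.pair_iff' hs0).2 fun c hc => hu ⟨c, mul_right_cancel₀ hs0 ?_⟩
    rwa [← Algebra.smul_def]
  have hspan : Submodule.span (ZMod p) (Set.range ![s, u * s]) = ⊤ := by
    have : FiniteDimensional (ZMod p) F := Module.finite_of_finrank_eq_succ hF
    exact hli.span_eq_top_of_card_eq_finrank (by simp [hF])
  have hle : Submodule.span (ZMod p) (Set.range ![s, u * s]) ≤ S.toZModSubmodule p := by
    rw [Submodule.span_le, Set.range_subset_iff]
    intro i; fin_cases i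
    exacts [hs, huS s hs]
  exact eq_top_iff.2 fun x _ => (hspan ▸ hle) (Submodule.mem_top (x := x))

theorem Units.val_notMem_range_algebraMap {u : Fˣ} (hu1 : u ≠ 1)
    (hu : (orderOf u).Coprime (p - 1)) : (u : F) ∉ Set.range (algebraMap (ZMod p) F) := by
  rintro ⟨c, hc⟩
  have hup : u ^ p = u := Units.ext (by simp [← hc, ← map_pow, ZMod.pow_card])
  have hdvd : orderOf u ∣ p - 1 := orderOf_dvd_of_pow_eq_one <| by
    rw [← mul_left_cancel_iff (a := u), ← pow_succ', Nat.sub_add_cancel (Fact.out : p.Prime).one_le,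
      hup, mul_one]
  exact hu1 (orderOf_eq_one_iff.1 (Nat.eq_one_of_dvd_coprimes hu dvd_rfl hdvd))

end Field

open SemidirectProduct

theorem SemidirectProduct.apply_mem_comap_inl {N H : Type*} [Group N] [Group H]
    {φ : H →* MulAut N} {K : Subgroup (N ⋊[φ] H)} {h : H}
    (hh : inr h ∈ normalizer (K : Set (N ⋊[φ] H))) {n : N} (hn : n ∈ K.comap inl) :
    φ h n ∈ K.comap inl := by
  simpa [mem_comap, inl_aut] using (mem_normalizer_iff.1 hh (inl n)).1 hn

noncomputable section CyclicAffineGroup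

variable {F : Type*} [Field F] (ζ : Fˣ)

def scalingAction : zpowers ζ →* MulAut (Multiplicative F) :=
  (MulAutMultiplicative F).symm.toMonoidHom.comp
    ((DistribMulAction.toAddAut Fˣ F).comp (zpowers ζ).subtype)

abbrev CyclicAffineGroup : Type _ := Multiplicative F ⋊[scalingAction ζ] zpowers ζ

def translations : Subgroup (CyclicAffineGroup ζ) := (inl : _ →* CyclicAffineGroup ζ).range

def scalings : Subgroup (CyclicAffineGroup ζ) := (inr : _ →* CyclicAffineGroup ζ).range

instance : IsMulCommutative (translations ζ) := range_isMulCommutative inl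

instance [Finite F] : Finite (CyclicAffineGroup ζ) := .of_equiv _ equivProd.symm

theorem card_cyclicAffineGroup : Nat.card (CyclicAffineGroup ζ) = Nat.card F * orderOf ζ := by
  rw [SemidirectProduct.card, Nat.card_zpowers, Nat.card_congr Multiplicative.toAdd]

instance : (translations ζ).Normal := by
  rw [translations, range_inl_eq_ker_rightHom]
  infer_instance

theorem card_translations : Nat.card (translations ζ) = Nat.card F :=
  (Nat.card_range_of_injective inl_injective).trans (Nat.card_congr Multiplicative.toAdd)

theorem index_translations : (translations ζ).index = orderOf ζ := by
  rw [translations, range_inl_eq_ker_rightHom, index_ker,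
    MonoidHom.range_eq_top.2 rightHom_surjective, card_top, Nat.card_zpowers]

theorem pow_char_eq_one_of_mem_translations (p : ℕ) [CharP F p] {a : CyclicAffineGroup ζ}
    (ha : a ∈ translations ζ) : a ^ p = 1 := by
  obtain ⟨x, rfl⟩ := ha
  rw [← map_pow, ← ofAdd_toAdd x, ← ofAdd_nsmul, nsmul_eq_mul, CharP.cast_eq_zero, zero_mul,
    ofAdd_zero, map_one]

instance : IsCyclic (scalings ζ) :=
  isCyclic_of_surjective _ (inr (φ := scalingAction ζ)).rangeRestrict_surjective

theorem card_scalings : Nat.card (scalings ζ) = orderOf ζ :=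
  (Nat.card_range_of_injective inr_injective).trans (Nat.card_zpowers ζ)

theorem translations_inf_scalings : translations ζ ⊓ scalings ζ = ⊥ := by
  rw [eq_bot_iff]
  rintro g ⟨⟨x, rfl⟩, ⟨z, hz⟩⟩
  have hx : x = 1 := by simpa using congrArg SemidirectProduct.left hz.symm
  simp [hx]

theorem translations_sup_scalings : translations ζ ⊔ scalings ζ = ⊤ := by
  refine eq_top_iff.2 fun g _ => ?_
  rw [← inl_left_mul_inr_right g]
  exact mul_mem (mem_sup_left ⟨g.left, rfl⟩) (mem_sup_right ⟨g.right, rfl⟩)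

variable {p : ℕ} [Fact p.Prime] [Algebra (ZMod p) F] in
theorem outsideElementsActIrreducibly_translations (hF : Module.finrank (ZMod p) F = 2)
    (hζ : (orderOf ζ).Coprime (p - 1)) : (translations ζ).OutsideElementsActIrreducibly := by
  intro K hKA hKbot hKA' g hg
  by_contra hgA
  have hg1 : g.right ≠ 1 := fun h => hgA (by rw [translations, range_inl_eq_ker_rightHom]; exact h)
  have hinr : inr g.right ∈ normalizer (K : Set (CyclicAffineGroup ζ)) := by
    have hl : inl g.left ∈ normalizer (K : Set (CyclicAffineGroup ζ)) :=
      le_normalizer_of_normal_subgroupOf hKA ⟨g.left, rfl⟩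
    have : (inl g.left)⁻¹ * g = inr g.right := by
      rw [inv_mul_eq_iff_eq_mul, inl_left_mul_inr_right]
    exact this ▸ mul_mem (inv_mem hl) hg
  have hK : K = (K.comap inl).map inl := (map_comap_eq_self hKA).symm
  have hS : (K.comap inl).toAddSubgroup' = ⊤ := by
    refine AddSubgroup.eq_top_of_mul_mem_of_finrank_eq_two hF
      (Units.val_notMem_range_algebraMap (fun h => hg1 (Subtype.ext h))
        (hζ.coprime_dvd_left (orderOf_dvd_of_mem_zpowers g.right.2))) ?_
      fun x hx => SemidirectProduct.apply_mem_comap_inl hinr hx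
    intro h
    rw [_root_.map_eq_bot_iff] at h
    exact hKbot (hK ▸ h ▸ map_bot _)
  rw [_root_.map_eq_top_iff] at hS
  exact hKA' (hK.trans (hS ▸ (MonoidHom.range_eq_map inl).symm))

end CyclicAffineGroup

theorem exists_group_order_12615_all_maximal_and_two_maximal_hall :
    ∃ (G : Type) (inst : Group G), Finite G ∧ @GoodExampleGroup G inst := by
  have : Fact (Nat.Prime 29) := ⟨by norm_num⟩
  have hF : Nat.card (GaloisField 29 2) = 29 ^ 2 := GaloisField.card 29 2 two_ne_zero
  obtain ⟨ζ, hζ⟩ : ∃ ζ : (GaloisField 29 2)ˣ, orderOf ζ = 15 :=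
    IsCyclic.exists_orderOf_eq_of_dvd (by rw [Nat.card_units, hF]; norm_num)
  have hirr := outsideElementsActIrreducibly_translations ζ (GaloisField.finrank 29 two_ne_zero)
    (hζ ▸ by norm_num : (orderOf ζ).Coprime (29 - 1))
  have hindex : (translations ζ).index = 15 := (index_translations ζ).trans hζ
  have hcop : (Nat.card (translations ζ)).Coprime (translations ζ).index := by
    rw [card_translations, hindex, hF]; norm_num
  have hsq : Squarefree (translations ζ).index := hindex ▸ Nat.squarefree_mul_iff.2
    ⟨by norm_num, Nat.prime_three.squarefree, Nat.prime_five.squarefree⟩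
  have hAtop : translations ζ ≠ ⊤ := fun h => by simp [h] at hindex
  have hAcoatom : ¬IsCoatom (translations ζ) :=
    not_isCoatom_of_prime_dvd_index hcop Nat.prime_three (by rw [hindex]; norm_num) (by omega)
  refine ⟨CyclicAffineGroup ζ, inferInstance, inferInstance, ?_, ⟨translations ζ, inferInstance,
    card_translations ζ ▸ hF, fun _ => pow_char_eq_one_of_mem_translations ζ 29,
    fun _ _ hKA => hirr.eq_bot_or_eq_of_normal hAtop hKA, scalings ζ, inferInstance,
    (card_scalings ζ).trans hζ, translations_inf_scalings ζ, translations_sup_scalings ζ⟩,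
    fun _ hM => hirr.isHallSubgroup_of_isCoatom hcop hsq hAtop hM,
    fun _ hH => hirr.isHallSubgroup_of_is2Maximal hcop hsq hAtop hAcoatom hH⟩
  rw [card_cyclicAffineGroup, hF, hζ]; norm_num
end

section
/- Let G be a finite group whose order is divisible by at least two distinct primes, suppose that every 2-maximal subgroup of G is a Hall subgroup of G, and suppose G is not supersolvable. If K < M < G with K normal in M, M normal in G, K maximal in M, and M maximal in G, then the indices |G : M| = p and |M : K| = q are distinct primes, p divides |G| but p² does not divide |G|, and q divides |G| but q² does not divide |G|. -/
/-! Since `M` and `K` are normal maximal subgroups of `G` and of `M`, the quotients `G/M` and `M/K`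
have no subgroups besides the trivial ones, so `p = |G : M|` and `q = |M : K|` are prime. The
2-maximal subgroup `K` is Hall, so `|G| = |K| q p` with `|K|` coprime to `q p`; this gives the
square-freeness claims once `p ≠ q`. If `p = q`, then `p` divides both `|M|` and `|G : M|`; unless
`|M| = p`, an element of order `p` of `M` lies in a maximal subgroup `H` of `M`, and `p` divides both
`|H|` and `|G : H|`, so the 2-maximal subgroup `H` is not Hall. Hence `|G| = p²`, which has only one
prime divisor. -/

open Subgroup

section

variable {G : Type*} [Group G]

theorem isMaximalIn_iff_covBy {H M : Subgroup G} : IsMaximalIn H M ↔ H ⋖ M :=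
  and_congr_right fun _ =>
    ⟨fun h _ hHK hKM => hKM.ne (h _ hHK hKM.le), fun h _ hHK hKM => hKM.eq_of_not_lt (h hHK)⟩

theorem isCoatom_subgroupOf_iff_covBy {H M : Subgroup G} (h : H ≤ M) :
    IsCoatom (H.subgroupOf M) ↔ H ⋖ M :=
  ((show Subgroup M ≃o Set.Iic M from MapSubtype.orderIso M).symm.isCoatom_iff ⟨H, h⟩).trans
    (covBy_iff_coatom_Iic h).symm

theorem prime_card_of_isSimpleOrder_subgroup {Q : Type*} [Group Q] [IsSimpleOrder (Subgroup Q)] :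
    (Nat.card Q).Prime := by
  have : Nontrivial Q := Subgroup.nontrivial_iff.mp inferInstance
  obtain ⟨g, hg⟩ := exists_ne (1 : Q)
  have : IsCyclic Q := ⟨g, (eq_top_iff' _).mp
    ((IsSimpleOrder.eq_bot_or_eq_top (zpowers g)).resolve_left (zpowers_ne_bot.mpr hg))⟩
  let := IsCyclic.commGroup (α := Q)
  have : IsSimpleGroup Q := ⟨fun H _ => IsSimpleOrder.eq_bot_or_eq_top H⟩
  exact IsSimpleGroup.prime_card

theorem Subgroup.index_prime_of_isCoatom {M : Subgroup G} [M.Normal] (hM : IsCoatom M) :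
    M.index.Prime := by
  have : IsSimpleOrder (Subgroup (G ⧸ M)) :=
    (show Subgroup (G ⧸ M) ≃o Set.Ici M from QuotientGroup.comapMk'OrderIso M).isSimpleOrder_iff.mpr
      (Set.isSimpleOrder_Ici_iff_isCoatom.mpr hM)
  rw [index_eq_card]
  exact prime_card_of_isSimpleOrder_subgroup

theorem card_eq_of_prime_dvd_index_of_dvd_card [Finite G] {M : Subgroup G}
    (hhall : ∀ H, H ⋖ M → IsHallSubgroup H) {p : ℕ} (hp : p.Prime)
    (hp_index : p ∣ M.index) (hp_card : p ∣ Nat.card M) : Nat.card M = p := by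
  have := Fact.mk hp
  obtain ⟨x, hx⟩ := exists_prime_orderOf_dvd_card' p hp_card
  have hPM : zpowers (x : G) ≤ M := zpowers_le.mpr x.2
  have hPcard : Nat.card (zpowers (x : G)) = p := by
    rw [Nat.card_zpowers, orderOf_coe, hx]
  by_contra hne
  obtain ⟨H, hPH, hHM⟩ := exists_le_covBy_of_lt (hPM.lt_of_ne fun h => hne (h ▸ hPcard))
  exact hp.ne_one (Nat.eq_one_of_dvd_coprimes (hhall H hHM) (hPcard ▸ card_dvd_of_le hPH)
    (hp_index.trans (index_dvd_of_le hHM.le)))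

end

theorem Nat.Prime.not_sq_dvd_mul_of_coprime {a b p : ℕ} (hp : p.Prime) (hab : a.Coprime b)
    (hb : Squarefree b) (hpb : p ∣ b) : ¬ p ^ 2 ∣ a * b := by
  intro h
  have hpa : (p ^ 2).Coprime a := ((Nat.Coprime.coprime_dvd_right hpb hab).symm).pow_left 2
  have hp2b : p * p ∣ b := sq p ▸ hpa.dvd_of_dvd_mul_left h
  exact hp.ne_one (Nat.isUnit_iff.mp (hb p hp2b))

theorem indices_prime_sigma_of_normal_chain_general
    {G : Type*} [Group G] [Finite G]
    (hπ : ∃ p q : ℕ, p.Prime ∧ q.Prime ∧ p ≠ q ∧ p ∣ Nat.card G ∧ q ∣ Nat.card G)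
    (hhall : ∀ H : Subgroup G, Is2Maximal H → IsHallSubgroup H)
    (K M : Subgroup G) (hKM : IsMaximalIn K M) (hM : IsCoatom M)
    (hKn : (K.subgroupOf M).Normal) (hMn : M.Normal) :
    ∃ p q : ℕ, p.Prime ∧ q.Prime ∧ p ≠ q ∧
      M.index = p ∧ K.relIndex M = q ∧
      p ∣ Nat.card G ∧ ¬ p ^ 2 ∣ Nat.card G ∧
      q ∣ Nat.card G ∧ ¬ q ^ 2 ∣ Nat.card G := by
  have hKleM : K ≤ M := hKM.1.le
  have hp : M.index.Prime := index_prime_of_isCoatom hM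
  have hq : (K.relIndex M).Prime := index_prime_of_isCoatom
    ((isCoatom_subgroupOf_iff_covBy hKleM).mpr (isMaximalIn_iff_covBy.mp hKM))
  have hcard : Nat.card G = Nat.card K * (K.relIndex M * M.index) := by
    rw [relIndex_mul_index hKleM, card_mul_index]
  have hpq : M.index ≠ K.relIndex M := by
    intro hpq
    have hMcard : Nat.card M = M.index :=
      card_eq_of_prime_dvd_index_of_dvd_card
        (fun H hH => hhall H ⟨M, hM, isMaximalIn_iff_covBy.mpr hH⟩)
        hp dvd_rfl (hpq ▸ (K.subgroupOf M).index_dvd_card)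
    have hG : Nat.card G = M.index * M.index := by rw [← card_mul_index M, hMcard]
    have hGp : ∀ r : ℕ, r.Prime → r ∣ Nat.card G → r = M.index := fun r hr hrG =>
      (Nat.prime_dvd_prime_iff_eq hr hp).mp ((hr.dvd_mul.mp (hG ▸ hrG)).elim id id)
    obtain ⟨r, s, hr, hs, hrs, hrG, hsG⟩ := hπ
    exact hrs ((hGp r hr hrG).trans (hGp s hs hsG).symm)
  have hsq : Squarefree (K.relIndex M * M.index) := Nat.squarefree_mul_iff.mpr
    ⟨(Nat.coprime_primes hq hp).mpr hpq.symm, hq.squarefree, hp.squarefree⟩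
  have hHall : (Nat.card K).Coprime (K.relIndex M * M.index) :=
    relIndex_mul_index hKleM ▸ hhall K ⟨M, hM, hKM⟩
  refine ⟨_, _, hp, hq, hpq, rfl, rfl, M.index_dvd_card, ?_, ?_, ?_⟩
  · exact hcard ▸ hp.not_sq_dvd_mul_of_coprime hHall hsq (dvd_mul_left _ _)
  · exact hcard ▸ (dvd_mul_right _ _).mul_left _
  · exact hcard ▸ hq.not_sq_dvd_mul_of_coprime hHall hsq (dvd_mul_right _ _)

theorem indices_prime_sigma_of_normal_chain
    {G : Type*} [Group G] [Finite G]
    (hπ : ∃ p q : ℕ, p.Prime ∧ q.Prime ∧ p ≠ q ∧ p ∣ Nat.card G ∧ q ∣ Nat.card G)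
    (hhall : ∀ H : Subgroup G, Is2Maximal H → IsHallSubgroup H)
    (hns : ¬ IsSupersolvable G)
    (K M : Subgroup G) (hKM : IsMaximalIn K M) (hM : IsCoatom M)
    (hKn : (K.subgroupOf M).Normal) (hMn : M.Normal) :
    ∃ p q : ℕ, p.Prime ∧ q.Prime ∧ p ≠ q ∧
      M.index = p ∧ K.relIndex M = q ∧
      p ∣ Nat.card G ∧ ¬ p ^ 2 ∣ Nat.card G ∧
      q ∣ Nat.card G ∧ ¬ q ^ 2 ∣ Nat.card G :=
  indices_prime_sigma_of_normal_chain_general hπ hhall K M hKM hM hKn hMn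
end

section
/- Let G be a finite group whose order is divisible by at least two distinct primes, suppose that every 2-maximal subgroup of G is a Hall subgroup of G, let N be a normal subgroup of G, and suppose the order of G/N is divisible by at least two distinct primes. Then every 2-maximal subgroup of the quotient group G/N is a Hall subgroup of G/N. -/
theorem quotient_inherits_two_maximal_hall
    {G : Type*} [Group G] [Finite G]
    (hπ : ∃ p q : ℕ, p.Prime ∧ q.Prime ∧ p ≠ q ∧ p ∣ Nat.card G ∧ q ∣ Nat.card G)
    (hhall : ∀ H : Subgroup G, Is2Maximal H → IsHallSubgroup H)
    (N : Subgroup G) [N.Normal]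
    (hπq : ∃ p q : ℕ, p.Prime ∧ q.Prime ∧ p ≠ q ∧
      p ∣ Nat.card (G ⧸ N) ∧ q ∣ Nat.card (G ⧸ N)) :
    ∀ H : Subgroup (G ⧸ N), Is2Maximal H → IsHallSubgroup H := by
  intro H h2
  set f := QuotientGroup.mk' N with hf_def
  have hf : Function.Surjective f := QuotientGroup.mk'_surjective N
  obtain ⟨M, hM, hHM, hmax⟩ := h2
  have hker : f.ker = N := QuotientGroup.ker_mk' N
  -- the preimage of H is 2-maximal in G
  have h2' : Is2Maximal (H.comap f) := by
    refine ⟨M.comap f, Subgroup.isCoatom_comap_of_surjective hf hM, ?_, ?_⟩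
    · exact (Subgroup.comap_lt_comap_of_surjective hf).2 hHM
    · intro K hHK hKM
      have hNK : f.ker ≤ K := (Subgroup.ker_le_comap (f := f) H).trans hHK.le
      have hcm : (K.map f).comap f = K := Subgroup.comap_map_eq_self hNK
      have h1 : H < K.map f := by
        rw [← Subgroup.comap_lt_comap_of_surjective hf, hcm]
        exact hHK
      have h2 : K.map f ≤ M := by
        have := Subgroup.map_mono (f := f) hKM
        rwa [Subgroup.map_comap_eq_self_of_surjective hf] at this
      have := hmax (K.map f) h1 h2
      rw [← hcm, this]
  have hcop := hhall _ h2'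
  unfold IsHallSubgroup at hcop ⊢
  rw [Subgroup.index_comap_of_surjective _ hf] at hcop
  have hdvd : Nat.card H ∣ Nat.card (H.comap f) := by
    have : Nat.card ((H.comap f).map f) ∣ Nat.card (H.comap f) :=
      Subgroup.card_dvd_of_surjective (f.subgroupMap (H.comap f))
        (f.subgroupMap_surjective (H.comap f))
    rwa [Subgroup.map_comap_eq_self_of_surjective hf] at this
  exact Nat.Coprime.coprime_dvd_left hdvd hcop
end
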